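/- arXiv:2605.08372 — 7 statements merged into one kernel-verified Lean document; each statement's English description precedes it below -/
import Mathlib

section
/- Let γ₁, γ₂ > 0 with γ₁ ≠ γ₂, and define k(y) = sqrt(γ₁² + γ₂² + 2γ₁γ₂ cos(y)), γ₋ = |γ₂ - γ₁|. Then for all y ∈ [0, π], k(y) - γ₋ ≥ (2 min{γ₁, γ₂}/π²)·(π - y)². -/
/-! With `s = (π - y)/π`, the radicand equals `γ₋² + 4γ₁γ₂ cos²(y/2)` and Jordan's inequality
gives `cos (y/2) ≥ s`. Squaring `γ₋ + 2 min γ₁ γ₂ · s²` and using `γ₋ + min = max`,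
`min · max = γ₁γ₂` and `s⁴ ≤ s²` shows it is at most `√(γ₋² + 4γ₁γ₂ s²) ≤ k y`. -/

open Real

/-- Jordan's inequality `sin x ≥ 2x/π`, read at `x = π/2 - y/2`. -/
theorem div_pi_le_cos_half {y : ℝ} (hy : y ∈ Set.Icc 0 π) : (π - y) / π ≤ cos (y / 2) := by
  have h := mul_le_sin (x := π / 2 - y / 2) (by linarith [hy.2]) (by linarith [hy.1])
  rw [sin_pi_div_two_sub] at h
  calc (π - y) / π = 2 / π * (π / 2 - y / 2) := by field_simp
    _ ≤ cos (y / 2) := h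

theorem sq_add_sq_add_two_mul_mul_cos (a b y : ℝ) :
    a ^ 2 + b ^ 2 + 2 * a * b * cos y = (b - a) ^ 2 + 4 * a * b * cos (y / 2) ^ 2 := by
  rw [cos_sq (y / 2), mul_div_cancel₀ y two_ne_zero]; ring

theorem abs_sub_add_two_min_mul_sq_le_sqrt {a b s c : ℝ} (ha : 0 ≤ a) (hb : 0 ≤ b)
    (hs₀ : 0 ≤ s) (hs₁ : s ≤ 1) (hsc : s ≤ c) :
    |b - a| + 2 * min a b * s ^ 2 ≤ √((b - a) ^ 2 + 4 * a * b * c ^ 2) := by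
  set m := min a b
  have hm : 0 ≤ m := le_min ha hb
  have hmax : |b - a| + m = max a b := by
    rw [abs_sub_comm, ← max_sub_min_eq_abs', sub_add_cancel]
  apply le_sqrt_of_sq_le
  calc (|b - a| + 2 * m * s ^ 2) ^ 2
        = (b - a) ^ 2 + 4 * m * |b - a| * s ^ 2 + 4 * m ^ 2 * (s ^ 2) ^ 2 := by
          rw [← sq_abs (b - a)]; ring
    _ ≤ (b - a) ^ 2 + 4 * m * |b - a| * s ^ 2 + 4 * m ^ 2 * s ^ 2 := by
          gcongr; nlinarith
    _ = (b - a) ^ 2 + 4 * (m * max a b) * s ^ 2 := by rw [← hmax]; ring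
    _ ≤ (b - a) ^ 2 + 4 * (a * b) * c ^ 2 := by rw [min_mul_max]; gcongr
    _ = (b - a) ^ 2 + 4 * a * b * c ^ 2 := by ring

theorem k_minus_gamma_minus_lower_bound_general
    (γ₁ γ₂ : ℝ) (h₁ : 0 < γ₁) (h₂ : 0 < γ₂)
    (k : ℝ → ℝ)
    (hk : ∀ y, k y = Real.sqrt (γ₁ ^ 2 + γ₂ ^ 2 + 2 * γ₁ * γ₂ * Real.cos y))
    (y : ℝ) (hy : y ∈ Set.Icc 0 π) :
    k y - |γ₂ - γ₁| ≥ (2 * min γ₁ γ₂ / π ^ 2) * (π - y) ^ 2 := by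
  have hs₀ : 0 ≤ (π - y) / π := div_nonneg (by linarith [hy.2]) pi_pos.le
  have hs₁ : (π - y) / π ≤ 1 := (div_le_one pi_pos).2 (by linarith [hy.1])
  have hrescale : (2 * min γ₁ γ₂ / π ^ 2) * (π - y) ^ 2 = 2 * min γ₁ γ₂ * ((π - y) / π) ^ 2 := by
    field_simp
  rw [hk, sq_add_sq_add_two_mul_mul_cos, hrescale]
  linarith [abs_sub_add_two_min_mul_sq_le_sqrt h₁.le h₂.le hs₀ hs₁ (div_pi_le_cos_half hy)]

theorem k_minus_gamma_minus_lower_bound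
    (γ₁ γ₂ : ℝ) (h₁ : 0 < γ₁) (h₂ : 0 < γ₂) (hne : γ₁ ≠ γ₂)
    (k : ℝ → ℝ)
    (hk : ∀ y, k y = Real.sqrt (γ₁ ^ 2 + γ₂ ^ 2 + 2 * γ₁ * γ₂ * Real.cos y))
    (y : ℝ) (hy : y ∈ Set.Icc 0 π) :
    k y - |γ₂ - γ₁| ≥ (2 * min γ₁ γ₂ / π ^ 2) * (π - y) ^ 2 :=
  k_minus_gamma_minus_lower_bound_general γ₁ γ₂ h₁ h₂ k hk y hy
end

section
/- Let γ₁, γ₂ > 0 with γ₁ ≠ γ₂, and define k(y) = sqrt(γ₁² + γ₂² + 2γ₁γ₂ cos(y)), γ₊ = γ₁ + γ₂. Then for all y ∈ [0, π], γ₊ - k(y) ≥ (2 min{γ₁, γ₂}/π²)·y². -/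
/-!
With `m = min γ₁ γ₂`, `M = max γ₁ γ₂` and `c = cos (y / 2)` one has
`k y ^ 2 = (M - m) ^ 2 + 4 m M c ^ 2 ≤ (M - m + 2 m c) ^ 2`, so `γ₊ - k y ≥ 2 m (1 - c)`.
Concavity of `sin` on `[0, π]` puts `sin (y / 4)` above the chord through `(π / 4, √2 / 2)`,
which gives `1 - c = 2 sin (y / 4) ^ 2 ≥ y ^ 2 / π ^ 2`.
-/

open Real

theorem Real.sin_div_mul_le_sin {t x : ℝ} (ht : t ≤ π) (hx : 0 ≤ x) (hxt : x ≤ t) :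
    sin t / t * x ≤ sin x := by
  rcases hx.eq_or_lt with rfl | hx
  · simp
  have ht0 : 0 < t := hx.trans_le hxt
  have := strictConcaveOn_sin_Icc.concaveOn.2 ⟨le_rfl, pi_pos.le⟩ ⟨ht0.le, ht⟩
    (sub_nonneg.2 ((div_le_one ht0).2 hxt)) (div_nonneg hx.le ht0.le) (sub_add_cancel 1 (x / t))
  simp only [smul_eq_mul, mul_zero, sin_zero, zero_add] at this
  rw [div_mul_cancel₀ x ht0.ne'] at this
  linarith [div_mul_comm (sin t) t x]

theorem Real.mul_sq_le_one_sub_cos {x : ℝ} (hx : 0 ≤ x) (hx' : x ≤ π / 2) :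
    4 / π ^ 2 * x ^ 2 ≤ 1 - cos x := by
  have hsin : sin (π / 4) / (π / 4) * (x / 2) ≤ sin (x / 2) :=
    sin_div_mul_le_sin (by linarith [pi_pos]) (by positivity) (by linarith)
  rw [sin_pi_div_four] at hsin
  have hchord : 0 ≤ √2 / 2 / (π / 4) * (x / 2) := by positivity
  have hsq : (√2 / 2 / (π / 4) * (x / 2)) ^ 2 = 2 / π ^ 2 * x ^ 2 := by
    field_simp
    rw [sq_sqrt zero_le_two]
    ring
  have hcos : 1 - cos x = 2 * sin (x / 2) ^ 2 := by
    have := cos_two_mul (x / 2)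
    rw [mul_div_cancel₀ x two_ne_zero] at this
    linarith [sin_sq_add_cos_sq (x / 2)]
  have hsin_sq := pow_le_pow_left₀ hchord hsin 2
  rw [hsq] at hsin_sq
  rw [hcos]
  linear_combination 2 * hsin_sq

theorem sqrt_sq_add_sq_add_two_mul_cos_le_of_le {a b x : ℝ} (ha : 0 ≤ a) (hab : a ≤ b)
    (hx : 0 ≤ cos (x / 2)) :
    √(a ^ 2 + b ^ 2 + 2 * a * b * cos x) ≤ (b - a) + 2 * a * cos (x / 2) := by
  have hcos : cos x = 2 * cos (x / 2) ^ 2 - 1 := by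
    rw [← cos_two_mul, mul_div_cancel₀ x two_ne_zero]
  rw [sqrt_le_iff, hcos]
  refine ⟨by nlinarith, ?_⟩
  -- the gap is `4 a (b - a) c (1 - c)` with `c = cos (x / 2)`
  nlinarith [mul_nonneg (mul_nonneg (mul_nonneg ha (sub_nonneg.2 hab)) hx)
    (sub_nonneg.2 (cos_le_one (x / 2)))]

theorem sqrt_sq_add_sq_add_two_mul_cos_le {a b x : ℝ} (ha : 0 ≤ a) (hb : 0 ≤ b)
    (hx : 0 ≤ cos (x / 2)) :
    √(a ^ 2 + b ^ 2 + 2 * a * b * cos x) ≤ |a - b| + 2 * min a b * cos (x / 2) := by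
  rcases le_total a b with hab | hab
  · rw [min_eq_left hab, abs_sub_comm, abs_of_nonneg (sub_nonneg.2 hab)]
    exact sqrt_sq_add_sq_add_two_mul_cos_le_of_le ha hab hx
  · rw [min_eq_right hab, abs_of_nonneg (sub_nonneg.2 hab)]
    convert sqrt_sq_add_sq_add_two_mul_cos_le_of_le hb hab hx using 2
    ring

theorem gamma_plus_minus_k_lower_bound_general
    (γ₁ γ₂ : ℝ) (h₁ : 0 < γ₁) (h₂ : 0 < γ₂)
    (k : ℝ → ℝ)
    (hk : ∀ y, k y = Real.sqrt (γ₁ ^ 2 + γ₂ ^ 2 + 2 * γ₁ * γ₂ * Real.cos y))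
    (y : ℝ) (hy : y ∈ Set.Icc 0 π) :
    (γ₁ + γ₂) - k y ≥ (2 * min γ₁ γ₂ / π ^ 2) * y ^ 2 := by
  obtain ⟨hy₀, hyπ⟩ := hy
  have hk_le : k y ≤ |γ₁ - γ₂| + 2 * min γ₁ γ₂ * cos (y / 2) := by
    rw [hk]
    exact sqrt_sq_add_sq_add_two_mul_cos_le h₁.le h₂.le
      (cos_nonneg_of_mem_Icc ⟨by linarith [pi_pos], by linarith⟩)
  have hcos := mul_sq_le_one_sub_cos (x := y / 2) (by linarith) (by linarith)
  have hmin : γ₁ + γ₂ - |γ₁ - γ₂| = 2 * min γ₁ γ₂ := by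
    rw [← max_sub_min_eq_abs', ← min_add_max γ₁ γ₂]; ring
  calc (γ₁ + γ₂) - k y ≥ 2 * min γ₁ γ₂ * (1 - cos (y / 2)) := by linarith
    _ ≥ 2 * min γ₁ γ₂ * (4 / π ^ 2 * (y / 2) ^ 2) :=
        mul_le_mul_of_nonneg_left hcos (by positivity)
    _ = (2 * min γ₁ γ₂ / π ^ 2) * y ^ 2 := by ring

theorem gamma_plus_minus_k_lower_bound
    (γ₁ γ₂ : ℝ) (h₁ : 0 < γ₁) (h₂ : 0 < γ₂) (hne : γ₁ ≠ γ₂)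
    (k : ℝ → ℝ)
    (hk : ∀ y, k y = Real.sqrt (γ₁ ^ 2 + γ₂ ^ 2 + 2 * γ₁ * γ₂ * Real.cos y))
    (y : ℝ) (hy : y ∈ Set.Icc 0 π) :
    (γ₁ + γ₂) - k y ≥ (2 * min γ₁ γ₂ / π ^ 2) * y ^ 2 :=
  gamma_plus_minus_k_lower_bound_general γ₁ γ₂ h₁ h₂ k hk y hy
end

section
/- Let γ₁, γ₂ > 0 with γ₁ ≠ γ₂, and k(y) = sqrt(γ₁² + γ₂² + 2γ₁γ₂ cos(y)) on [0, π]. Then sup_{y ∈ [0,π]} |k'(y)| = min{γ₁, γ₂}, attained at y_M = arccos(-min{γ₁,γ₂}/max{γ₁,γ₂}). -/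
/-!
Since `k(y)² - (γ sin y)² = (γ' + γ cos y)²` for either ordering `{γ, γ'} = {γ₁, γ₂}`, both
`γ₁ |sin y|` and `γ₂ |sin y|` are at most `k(y)`, so `|k'(y)| = γ₁ γ₂ |sin y| / k(y) ≤ min γ₁ γ₂`.
With `m = min γ₁ γ₂` and `M = max γ₁ γ₂`, equality holds where `m + M cos y = 0`, i.e. at
`y = arccos (-m / M)`, and there `k(y) = M sin y > 0` because `m < M`.
-/

open Real

/-- The modulus `‖a + b e^{iy}‖`: the third side of a triangle with sides `a`, `b` enclosing the
angle `π - y`. -/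
noncomputable def lawOfCosinesSide (a b y : ℝ) : ℝ :=
  √(a ^ 2 + b ^ 2 + 2 * a * b * cos y)

lemma lawOfCosinesSide_comm (a b y : ℝ) : lawOfCosinesSide a b y = lawOfCosinesSide b a y := by
  unfold lawOfCosinesSide
  ring_nf

lemma lawOfCosinesSide_nonneg (a b y : ℝ) : 0 ≤ lawOfCosinesSide a b y :=
  sqrt_nonneg _

lemma lawOfCosinesSide_min_max (a b y : ℝ) :
    lawOfCosinesSide (min a b) (max a b) y = lawOfCosinesSide a b y := by
  rcases le_total a b with h | h
  · rw [min_eq_left h, max_eq_right h]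
  · rw [min_eq_right h, max_eq_left h, lawOfCosinesSide_comm]

lemma sq_add_sq_add_mul_cos_sub_sq_mul_sin (a b y : ℝ) :
    a ^ 2 + b ^ 2 + 2 * a * b * cos y - (b * sin y) ^ 2 = (a + b * cos y) ^ 2 := by
  linear_combination (-b ^ 2) * sin_sq_add_cos_sq y

lemma abs_mul_sin_le_lawOfCosinesSide (a b y : ℝ) : |b * sin y| ≤ lawOfCosinesSide a b y :=
  abs_le_sqrt <| by linarith [sq_add_sq_add_mul_cos_sub_sq_mul_sin a b y, sq_nonneg (a + b * cos y)]

lemma abs_mul_mul_sin_le_min_mul (a b y : ℝ) (ha : 0 ≤ a) (hb : 0 ≤ b) :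
    |a * b * sin y| ≤ min a b * lawOfCosinesSide a b y := by
  rcases le_total a b with h | h
  · rw [min_eq_left h, mul_assoc, abs_mul, abs_of_nonneg ha]
    exact mul_le_mul_of_nonneg_left (abs_mul_sin_le_lawOfCosinesSide a b y) ha
  · rw [min_eq_right h, mul_comm a, mul_assoc, abs_mul, abs_of_nonneg hb, lawOfCosinesSide_comm]
    exact mul_le_mul_of_nonneg_left (abs_mul_sin_le_lawOfCosinesSide b a y) hb

lemma lawOfCosinesSide_eq_abs_of_mul_cos_eq {a b y : ℝ} (h : b * cos y = -a) :
    lawOfCosinesSide a b y = |b * sin y| := by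
  rw [← sqrt_sq_eq_abs, lawOfCosinesSide]
  congr 1
  linear_combination sq_add_sq_add_mul_cos_sub_sq_mul_sin a b y + (a + b * cos y) * h

lemma sin_arccos_neg_div_pos {a b : ℝ} (ha : 0 ≤ a) (hab : a < b) :
    0 < sin (arccos (-(a / b))) := by
  have hb : 0 < b := ha.trans_lt hab
  rw [sin_arccos, sqrt_pos, neg_sq, div_pow, sub_pos, div_lt_one (by positivity)]
  nlinarith

lemma cos_arccos_neg_div {a b : ℝ} (ha : 0 ≤ a) (hab : a ≤ b) :
    cos (arccos (-(a / b))) = -(a / b) := by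
  have hdiv : a / b ≤ 1 := div_le_one_of_le₀ hab (ha.trans hab)
  have hdiv_nonneg : 0 ≤ a / b := div_nonneg ha (ha.trans hab)
  exact cos_arccos (by linarith) (by linarith)

lemma abs_mul_mul_sin_div_lawOfCosinesSide_arccos {a b : ℝ} (ha : 0 ≤ a) (hab : a < b) :
    |a * b * sin (arccos (-(a / b)))| / lawOfCosinesSide a b (arccos (-(a / b))) = a := by
  set y := arccos (-(a / b))
  have hb : 0 < b := ha.trans_lt hab
  have hcos : b * cos y = -a := by
    rw [cos_arccos_neg_div ha hab.le]
    field_simp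
  have hsin : 0 < b * sin y := mul_pos hb (sin_arccos_neg_div_pos ha hab)
  rw [lawOfCosinesSide_eq_abs_of_mul_cos_eq hcos, abs_of_pos hsin, mul_assoc, abs_mul,
    abs_of_nonneg ha, abs_of_pos hsin, mul_div_cancel_right₀ _ hsin.ne']

theorem k_deriv_sup_eq_min
    (γ₁ γ₂ : ℝ) (h₁ : 0 < γ₁) (h₂ : 0 < γ₂) (hne : γ₁ ≠ γ₂)
    (k : ℝ → ℝ)
    (hk : ∀ y, k y = Real.sqrt (γ₁ ^ 2 + γ₂ ^ 2 + 2 * γ₁ * γ₂ * Real.cos y))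
    (k' : ℝ → ℝ)
    (hk' : ∀ y, k' y = -(γ₁ * γ₂ * Real.sin y) / k y) :
    (∀ y ∈ Set.Icc 0 π, |k' y| ≤ min γ₁ γ₂) ∧
    Real.arccos (-(min γ₁ γ₂ / max γ₁ γ₂)) ∈ Set.Icc 0 π ∧
    |k' (Real.arccos (-(min γ₁ γ₂ / max γ₁ γ₂)))| = min γ₁ γ₂ := by
  have habs_k' : ∀ y, |k' y| = |γ₁ * γ₂ * sin y| / lawOfCosinesSide γ₁ γ₂ y := fun y => by
    rw [hk', hk, abs_div, abs_neg, abs_of_nonneg (sqrt_nonneg _), lawOfCosinesSide]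
  refine ⟨fun y _ => ?_, ⟨arccos_nonneg _, arccos_le_pi _⟩, ?_⟩
  · rw [habs_k']
    exact div_le_of_le_mul₀ (lawOfCosinesSide_nonneg _ _ _) (le_min h₁.le h₂.le)
      (abs_mul_mul_sin_le_min_mul γ₁ γ₂ y h₁.le h₂.le)
  · rw [habs_k', ← min_mul_max γ₁ γ₂, ← lawOfCosinesSide_min_max]
    exact abs_mul_mul_sin_div_lawOfCosinesSide_arccos (le_min h₁.le h₂.le) (min_lt_max.mpr hne)
end

section
/- Let γ₁, γ₂ > 0 with γ₁ ≠ γ₂, and k(y) = sqrt(γ₁² + γ₂² + 2γ₁γ₂ cos(y)). Then the third derivative k'''(y) is nonnegative on [0, π] and vanishes only at y = 0 and y = π. -/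
open Real

theorem k_third_deriv_nonneg_vanishes_only_at_endpoints
    (γ₁ γ₂ : ℝ) (h₁ : 0 < γ₁) (h₂ : 0 < γ₂) (hne : γ₁ ≠ γ₂)
    (k : ℝ → ℝ)
    (hk : ∀ y, k y = Real.sqrt (γ₁ ^ 2 + γ₂ ^ 2 + 2 * γ₁ * γ₂ * Real.cos y))
    (k''' : ℝ → ℝ)
    (hk''' : ∀ y, k''' y =
      -(γ₁ * γ₂) * (3 * γ₁ * γ₂ * Real.cos y * Real.sin y / (k y) ^ 3
        + 3 * γ₁ ^ 2 * γ₂ ^ 2 * (Real.sin y) ^ 3 / (k y) ^ 5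
        - Real.sin y / k y)) :
    ∀ y ∈ Set.Icc 0 π, 0 ≤ k''' y ∧ (k''' y = 0 ↔ y = 0 ∨ y = π) := by
  intro y hy
  obtain ⟨hy0, hyπ⟩ := hy
  have hd : γ₁ - γ₂ ≠ 0 := sub_ne_zero.mpr hne
  have hdsq : 0 < (γ₁ - γ₂) ^ 2 := by positivity
  have hc1 : -1 ≤ Real.cos y := Real.neg_one_le_cos y
  have hc2 : Real.cos y ≤ 1 := Real.cos_le_one y
  have hb : 0 < γ₁ * γ₂ := mul_pos h₁ h₂
  have hA : 0 < γ₁ ^ 2 + γ₂ ^ 2 + 2 * γ₁ * γ₂ * Real.cos y := by nlinarith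
  have hkpos : 0 < k y := by rw [hk]; exact Real.sqrt_pos.mpr hA
  have hksq : (k y) ^ 2 = γ₁ ^ 2 + γ₂ ^ 2 + 2 * γ₁ * γ₂ * Real.cos y := by
    rw [hk]; exact Real.sq_sqrt hA.le
  have hs : 0 ≤ Real.sin y := Real.sin_nonneg_of_nonneg_of_le_pi hy0 hyπ
  have hsc : Real.sin y ^ 2 + Real.cos y ^ 2 = 1 := Real.sin_sq_add_cos_sq y
  have hk4 : (k y) ^ 4 = (γ₁ ^ 2 + γ₂ ^ 2 + 2 * γ₁ * γ₂ * Real.cos y) ^ 2 := by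
    rw [show (k y) ^ 4 = ((k y) ^ 2) ^ 2 by ring, hksq]
  have hsum : 0 < ((γ₁ - γ₂) * (γ₁ + γ₂)) ^ 2 := by positivity
  have hQ : 0 < (k y) ^ 4 - 3 * γ₁ * γ₂ * Real.cos y * (k y) ^ 2
      - 3 * (γ₁ * γ₂) ^ 2 * (Real.sin y) ^ 2 := by
    rw [hk4, hksq]
    nlinarith [sq_nonneg (2 * γ₁ * γ₂ * Real.cos y + γ₁ ^ 2 + γ₂ ^ 2)]
  have hkne : k y ≠ 0 := ne_of_gt hkpos
  have key : k''' y = γ₁ * γ₂ * Real.sin y * ((k y) ^ 4 - 3 * γ₁ * γ₂ * Real.cos y * (k y) ^ 2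
      - 3 * (γ₁ * γ₂) ^ 2 * (Real.sin y) ^ 2) / (k y) ^ 5 := by
    rw [hk''' y]
    field_simp
    ring
  constructor
  · rw [key]
    exact div_nonneg (mul_nonneg (mul_nonneg hb.le hs) hQ.le) (by positivity)
  · constructor
    · intro h0
      rw [key] at h0
      have h5 : (0:ℝ) < (k y) ^ 5 := by positivity
      have hsz : Real.sin y = 0 := by
        have hnum : γ₁ * γ₂ * Real.sin y * ((k y) ^ 4 - 3 * γ₁ * γ₂ * Real.cos y * (k y) ^ 2
            - 3 * (γ₁ * γ₂) ^ 2 * (Real.sin y) ^ 2) = 0 := by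
          rcases div_eq_zero_iff.mp h0 with h | h
          · exact h
          · exact absurd h (ne_of_gt h5)
        rcases mul_eq_zero.mp hnum with h | h
        · rcases mul_eq_zero.mp h with h' | h'
          · exact absurd h' (ne_of_gt hb)
          · exact h'
        · exact absurd h (ne_of_gt hQ)
      by_contra hcon
      push_neg at hcon
      have hlt : 0 < y := lt_of_le_of_ne hy0 (Ne.symm hcon.1)
      have hlt2 : y < π := lt_of_le_of_ne hyπ hcon.2
      exact absurd hsz (ne_of_gt (Real.sin_pos_of_pos_of_lt_pi hlt hlt2))
    · intro h
      rw [key]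
      rcases h with h | h <;> simp [h]
end

section
/- Let γ₁, γ₂ > 0 with γ₁ ≠ γ₂ and G = γ₂/γ₁ + γ₁/γ₂. Then the polynomial P(c) = c⁴ + 2G c³ + (10 - G²) c² + (G³ - 2G) c + 4G² - 15 is strictly increasing on [-1, 1], satisfies P(-1) < 0 and P(1) > 0, and hence has exactly one root in [-1, 1]. -/
/-!
By AM-GM, `G > 2`. The derivative of `P` is `4(c+1)³` plus `(G - 2)` times a positive quadratic,
hence positive for `c > -1`, so `P` is strictly increasing on `[-1, ∞)`. The endpoint values factor
as `P(-1) = -(G - 2)²(G + 1) < 0` and `P(1) = (G + 2)²(G - 1) > 0`, and the intermediate value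
theorem together with injectivity gives the unique root.
-/

open Set

theorem two_lt_div_add_div {a b : ℝ} (ha : 0 < a) (hb : 0 < b) (hab : a ≠ b) :
    2 < b / a + a / b := by
  have hsq : 0 < (a - b) ^ 2 := sq_pos_of_ne_zero (sub_ne_zero.mpr hab)
  rw [div_add_div _ _ ha.ne' hb.ne', lt_div_iff₀ (mul_pos ha hb)]
  nlinarith

def quartic (G c : ℝ) : ℝ :=
  c ^ 4 + 2 * G * c ^ 3 + (10 - G ^ 2) * c ^ 2 + (G ^ 3 - 2 * G) * c + 4 * G ^ 2 - 15

theorem hasDerivAt_quartic (G c : ℝ) :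
    HasDerivAt (quartic G)
      (4 * (c + 1) ^ 3 + (G - 2) * (6 * (c - (G + 2) / 6) ^ 2 + (5 * G ^ 2 + 8 * G + 8) / 6)) c := by
  have h := ((((hasDerivAt_pow 4 c).add ((hasDerivAt_pow 3 c).const_mul (2 * G))).add
    ((hasDerivAt_pow 2 c).const_mul (10 - G ^ 2))).add
    ((hasDerivAt_id c).const_mul (G ^ 3 - 2 * G))).add_const (4 * G ^ 2) |>.sub_const 15
  exact h.congr_deriv (by ring)

theorem continuous_quartic (G : ℝ) : Continuous (quartic G) := by
  unfold quartic; fun_prop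

theorem strictMonoOn_quartic {G : ℝ} (hG : 2 ≤ G) : StrictMonoOn (quartic G) (Ici (-1)) := by
  refine strictMonoOn_of_deriv_pos (convex_Ici _) (continuous_quartic G).continuousOn fun c hc => ?_
  rw [interior_Ici] at hc
  rw [(hasDerivAt_quartic G c).deriv]
  have hc : 0 < c + 1 := by linarith [mem_Ioi.mp hc]
  have hrest : 0 ≤ (G - 2) * (6 * (c - (G + 2) / 6) ^ 2 + (5 * G ^ 2 + 8 * G + 8) / 6) :=
    mul_nonneg (by linarith) (by positivity)
  positivity

theorem quartic_neg_one (G : ℝ) : quartic G (-1) = -((G - 2) ^ 2 * (G + 1)) := by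
  unfold quartic; ring

theorem quartic_one (G : ℝ) : quartic G 1 = (G + 2) ^ 2 * (G - 1) := by
  unfold quartic; ring

theorem StrictMonoOn.existsUnique_eq_zero_of_continuousOn {f : ℝ → ℝ} {a b : ℝ}
    (hmono : StrictMonoOn f (Icc a b)) (hcont : ContinuousOn f (Icc a b))
    (ha : f a ≤ 0) (hb : 0 ≤ f b) (hab : a ≤ b) :
    ∃! c, c ∈ Icc a b ∧ f c = 0 := by
  obtain ⟨c, hc, hfc⟩ := intermediate_value_Icc hab hcont ⟨ha, hb⟩
  exact ⟨c, ⟨hc, hfc⟩, fun y ⟨hy, hfy⟩ => hmono.injOn hy hc (hfy.trans hfc.symm)⟩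

theorem quartic_strictly_increasing_unique_root
    (γ₁ γ₂ : ℝ) (h₁ : 0 < γ₁) (h₂ : 0 < γ₂) (hne : γ₁ ≠ γ₂)
    (G : ℝ) (hG : G = γ₂ / γ₁ + γ₁ / γ₂)
    (P : ℝ → ℝ)
    (hP : ∀ c, P c = c ^ 4 + 2 * G * c ^ 3 + (10 - G ^ 2) * c ^ 2
      + (G ^ 3 - 2 * G) * c + 4 * G ^ 2 - 15) :
    StrictMonoOn P (Set.Icc (-1) 1) ∧ P (-1) < 0 ∧ P 1 > 0 ∧
    (∃! c, c ∈ Set.Icc (-1 : ℝ) 1 ∧ P c = 0) := by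
  obtain rfl : P = quartic G := funext hP
  have hG2 : 2 < G := hG ▸ two_lt_div_add_div h₁ h₂ hne
  have hmono : StrictMonoOn (quartic G) (Icc (-1) 1) :=
    (strictMonoOn_quartic hG2.le).mono Icc_subset_Ici_self
  have hneg : quartic G (-1) < 0 := by
    rw [quartic_neg_one, neg_lt_zero]
    exact mul_pos (sq_pos_of_ne_zero (sub_pos.mpr hG2).ne') (by linarith)
  have hpos : quartic G 1 > 0 := by
    rw [quartic_one]; exact mul_pos (by positivity) (by linarith)
  exact ⟨hmono, hneg, hpos, hmono.existsUnique_eq_zero_of_continuousOn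
    (continuous_quartic G).continuousOn hneg.le hpos.le (by norm_num)⟩
end

section
/- Let γ₋ < γ₊ be positive reals and define L(λ) = -2λ/(sqrt(γ₊ + λ)·sqrt(λ + γ₋)) for λ ∈ [γ₋, γ₊]. Then L is Lipschitz on [γ₋, γ₊] with Lipschitz constant at most 3/(4·sqrt(γ₋·(γ₊+γ₋)/2)). In particular, if γ₊ = γ₁ + γ₂ and γ₋ = |γ₂ - γ₁| with γ₁, γ₂ > 0, γ₁ ≠ γ₂, then the Lipschitz constant is at most (3/4)·1/sqrt(γ₋·max{γ₁, γ₂}). -/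
/-!
On `[γ₋, γ₊]` the derivative of `L` is `-((γ₊ + γ₋) λ + 2 γ₊ γ₋) / ((γ₊ + λ)(λ + γ₋))^{3/2}`.
Writing `s = √((γ₊ + λ)(λ + γ₋))`, its numerator is at most `3 s² / 2` and `s ≥ 2 √(γ₋ (γ₊ + γ₋) / 2)`
because `λ ≥ γ₋`, so `|L'| ≤ 3 / (2 s) ≤ 3 / (4 √(γ₋ (γ₊ + γ₋) / 2))`, and the mean value theorem
gives the Lipschitz bound. When `γ₊ = γ₁ + γ₂` and `γ₋ = |γ₂ - γ₁|`, `(γ₊ + γ₋) / 2 = max γ₁ γ₂`.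
-/

open Real Set

theorem hasDerivAt_neg_two_mul_div_sqrt_mul_sqrt {a b x : ℝ} (ha : 0 < a + x) (hb : 0 < x + b) :
    HasDerivAt (fun y => -2 * y / (√(a + y) * √(y + b)))
      (-(((a + b) * x + 2 * a * b) / √((a + x) * (x + b)) ^ 3)) x := by
  have hda : HasDerivAt (fun y => √(a + y)) (1 / (2 * √(a + x))) x := by
    simpa [Function.comp_def] using
      (hasDerivAt_sqrt ha.ne').comp x ((hasDerivAt_id x).const_add a)
  have hdb : HasDerivAt (fun y => √(y + b)) (1 / (2 * √(x + b))) x := by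
    simpa [Function.comp_def] using
      (hasDerivAt_sqrt hb.ne').comp x ((hasDerivAt_id x).add_const b)
  have hnum : HasDerivAt (fun y : ℝ => -2 * y) (-2) x := by
    simpa using (hasDerivAt_id x).const_mul (-2 : ℝ)
  have hden : √(a + x) * √(x + b) ≠ 0 := (mul_pos (sqrt_pos.2 ha) (sqrt_pos.2 hb)).ne'
  have hprod : HasDerivAt (fun y => √(a + y) * √(y + b))
      (1 / (2 * √(a + x)) * √(x + b) + √(a + x) * (1 / (2 * √(x + b)))) x := hda.mul hdb
  refine (hnum.div hprod hden).congr_deriv ?_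
  rw [sqrt_mul ha.le]
  field_simp
  linear_combination (x - 2 * √(x + b) ^ 2) * sq_sqrt ha.le + (x - 2 * (a + x)) * sq_sqrt hb.le

theorem div_sqrt_mul_pow_three_le {a b x : ℝ} (ha : 0 ≤ a) (hb : 0 < b) (hbx : b ≤ x) :
    ((a + b) * x + 2 * a * b) / √((a + x) * (x + b)) ^ 3 ≤ 3 / (4 * √(b * (a + b) / 2)) := by
  set s := √((a + x) * (x + b))
  set t := √(b * (a + b) / 2)
  have hs : 0 < s := sqrt_pos.2 (by nlinarith)
  have ht : 0 < t := sqrt_pos.2 (by positivity)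
  have hs2 : s ^ 2 = (a + x) * (x + b) := sq_sqrt (by nlinarith)
  have ht2 : t ^ 2 = b * (a + b) / 2 := sq_sqrt (by positivity)
  have two_t_le_s : 2 * t ≤ s := by nlinarith
  have numerator_nonneg : 0 ≤ (a + b) * x + 2 * a * b := by nlinarith
  have numerator_le : 2 * ((a + b) * x + 2 * a * b) ≤ 3 * s ^ 2 := by
    rw [hs2]; nlinarith
  rw [div_le_div_iff₀ (by positivity) (by positivity)]
  nlinarith [mul_le_mul two_t_le_s numerator_le (by linarith) hs.le]

theorem abs_neg_two_mul_div_sqrt_mul_sqrt_sub_le {a b : ℝ} (hb : 0 < b) :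
    ∀ x ∈ Icc b a, ∀ y ∈ Icc b a,
      |-2 * x / (√(a + x) * √(x + b)) - -2 * y / (√(a + y) * √(y + b))| ≤
        3 / (4 * √(b * (a + b) / 2)) * |x - y| := by
  intro x hx y hy
  have hderiv : ∀ z ∈ Icc b a, HasDerivWithinAt (fun y => -2 * y / (√(a + y) * √(y + b)))
      (-(((a + b) * z + 2 * a * b) / √((a + z) * (z + b)) ^ 3)) (Icc b a) z := fun z hz =>
    (hasDerivAt_neg_two_mul_div_sqrt_mul_sqrt (by linarith [hz.1, hz.2])
      (by linarith [hz.1])).hasDerivWithinAt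
  have hbound : ∀ z ∈ Icc b a,
      ‖-(((a + b) * z + 2 * a * b) / √((a + z) * (z + b)) ^ 3)‖ ≤
        3 / (4 * √(b * (a + b) / 2)) := by
    intro z ⟨hbz, hza⟩
    have ha : 0 ≤ a := by linarith
    rw [norm_neg, norm_of_nonneg (div_nonneg (by nlinarith) (by positivity))]
    exact div_sqrt_mul_pow_three_le ha hb hbz
  simpa only [norm_eq_abs] using
    (convex_Icc b a).norm_image_sub_le_of_norm_hasDerivWithin_le hderiv hbound hy hx

theorem abs_sub_mul_add_add_abs_sub_div_two (γ₁ γ₂ : ℝ) :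
    |γ₂ - γ₁| * (γ₁ + γ₂ + |γ₂ - γ₁|) / 2 = |γ₂ - γ₁| * max γ₁ γ₂ := by
  rw [← two_nsmul_sup_eq_add_add_abs_sub, two_nsmul]
  ring

theorem L_lipschitz_general
    (γm γp : ℝ) (hγm : 0 < γm)
    (L : ℝ → ℝ)
    (hL : ∀ lam, L lam = -2 * lam / (Real.sqrt (γp + lam) * Real.sqrt (lam + γm))) :
    (∀ lam ∈ Set.Icc γm γp, ∀ mu ∈ Set.Icc γm γp,
      |L lam - L mu| ≤ 3 / (4 * Real.sqrt (γm * (γp + γm) / 2)) * |lam - mu|) ∧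
    (∀ γ₁ γ₂ : ℝ, 0 < γ₁ → 0 < γ₂ → γ₁ ≠ γ₂ → γp = γ₁ + γ₂ → γm = |γ₂ - γ₁| →
      ∀ lam ∈ Set.Icc γm γp, ∀ mu ∈ Set.Icc γm γp,
        |L lam - L mu| ≤ (3 / 4) * (1 / Real.sqrt (γm * max γ₁ γ₂)) * |lam - mu|) := by
  obtain rfl : L = fun lam => -2 * lam / (√(γp + lam) * √(lam + γm)) := funext hL
  have lipschitz := abs_neg_two_mul_div_sqrt_mul_sqrt_sub_le (a := γp) hγm
  refine ⟨lipschitz, fun γ₁ γ₂ _ _ _ hp hm lam hlam mu hmu => ?_⟩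
  have hmax : γm * (γp + γm) / 2 = γm * max γ₁ γ₂ := by
    rw [hp, hm, ← abs_sub_mul_add_add_abs_sub_div_two, mul_div_assoc]
  calc _ ≤ 3 / (4 * √(γm * max γ₁ γ₂)) * |lam - mu| := hmax ▸ lipschitz lam hlam mu hmu
    _ = 3 / 4 * (1 / √(γm * max γ₁ γ₂)) * |lam - mu| := by ring

theorem L_lipschitz
    (γm γp : ℝ) (hγm : 0 < γm) (hγp : 0 < γp) (hlt : γm < γp)
    (L : ℝ → ℝ)
    (hL : ∀ lam, L lam = -2 * lam / (Real.sqrt (γp + lam) * Real.sqrt (lam + γm))) :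
    (∀ lam ∈ Set.Icc γm γp, ∀ mu ∈ Set.Icc γm γp,
      |L lam - L mu| ≤ 3 / (4 * Real.sqrt (γm * (γp + γm) / 2)) * |lam - mu|) ∧
    (∀ γ₁ γ₂ : ℝ, 0 < γ₁ → 0 < γ₂ → γ₁ ≠ γ₂ → γp = γ₁ + γ₂ → γm = |γ₂ - γ₁| →
      ∀ lam ∈ Set.Icc γm γp, ∀ mu ∈ Set.Icc γm γp,
        |L lam - L mu| ≤ (3 / 4) * (1 / Real.sqrt (γm * max γ₁ γ₂)) * |lam - mu|) :=
  L_lipschitz_general γm γp hγm L hL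
end

section
/- For all t > 0 and any 0 < b ≤ π and constant c > 0, ∫_0^b ∫_{c y² t}^{∞} (e^{-x}/x) dx dy ≤ C·(1 + c^{-2/3})·t^{-1/2} for some absolute constant C independent of b, c, t. -/
/-!
Substituting `z = √(ct) y` turns the left-hand side into `(ct)^{-1/2} ∫₀^{b√(ct)} E₁(z²) dz`.
The last integral is bounded independently of `b` by `∫₀^∞ E₁(z²) dz`, which is finite because
`E₁(s) ≤ Γ(α) s^{-α}` for every `α > 0`: take `α = 1/3` on `(0, 1]` and `α = 2/3` on `(1, ∞)`,
so that `E₁(z²) ≲ z^{-2/3}` is integrable at `0` and `E₁(z²) ≲ z^{-4/3}` at `∞`.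
Finally `c^{-1/2} ≤ 1 + c^{-2/3}`.
-/
open Real MeasureTheory Set

noncomputable def expIntegralE1 (s : ℝ) : ℝ := ∫ x in Ioi s, exp (-x) / x

lemma expIntegralE1_nonneg {s : ℝ} (hs : 0 ≤ s) : 0 ≤ expIntegralE1 s :=
  setIntegral_nonneg measurableSet_Ioi fun x hx => by
    have : 0 < x := hs.trans_lt hx
    positivity

lemma expIntegralE1_le_rpow_mul_Gamma {s α : ℝ} (hs : 0 < s) (hα : 0 < α) :
    expIntegralE1 s ≤ s ^ (-α) * Gamma α := by
  have hGamma : IntegrableOn (fun x => exp (-x) * x ^ (α - 1)) (Ioi 0) :=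
    GammaIntegral_convergent hα
  calc expIntegralE1 s
      ≤ ∫ x in Ioi s, s ^ (-α) * (exp (-x) * x ^ (α - 1)) := by
        refine integral_mono_of_nonneg ?_ ((hGamma.mono_set (Ioi_subset_Ioi hs.le)).const_mul _) ?_
        · filter_upwards [ae_restrict_mem measurableSet_Ioi] with x (hx : s < x)
          have : 0 < x := hs.trans hx
          positivity
        · filter_upwards [ae_restrict_mem measurableSet_Ioi] with x (hx : s < x)
          have hx0 : 0 < x := hs.trans hx
          have hinv : x⁻¹ = x ^ (-α) * x ^ (α - 1) := by
            rw [← rpow_add hx0, show -α + (α - 1) = -1 by ring, rpow_neg_one]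
          have hdecay : x ^ (-α) ≤ s ^ (-α) := rpow_le_rpow_of_nonpos hs hx.le (by linarith)
          calc exp (-x) / x = x ^ (-α) * (exp (-x) * x ^ (α - 1)) := by
                rw [div_eq_mul_inv, hinv]; ring
            _ ≤ s ^ (-α) * (exp (-x) * x ^ (α - 1)) := by gcongr
    _ ≤ s ^ (-α) * ∫ x in Ioi 0, exp (-x) * x ^ (α - 1) := by
        rw [integral_const_mul]
        refine mul_le_mul_of_nonneg_left (setIntegral_mono_set hGamma ?_ ?_) (by positivity)
        · filter_upwards [ae_restrict_mem measurableSet_Ioi] with x (hx : 0 < x)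
          positivity
        · exact (Ioi_subset_Ioi hs.le).eventuallyLE
    _ = s ^ (-α) * Gamma α := by rw [Gamma_eq_integral hα]

lemma expIntegralE1_sq_le {z α : ℝ} (hz : 0 < z) (hα : 0 < α) :
    expIntegralE1 (z ^ 2) ≤ Gamma α * z ^ (-2 * α) := by
  have hpow : (z ^ 2) ^ (-α) = z ^ (-2 * α) := by
    rw [← rpow_natCast, ← rpow_mul hz.le]
    norm_num
  simpa only [hpow, mul_comm] using expIntegralE1_le_rpow_mul_Gamma (pow_pos hz 2) hα

lemma integral_expIntegralE1_sq_le {B : ℝ} (hB : 0 ≤ B) :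
    ∫ z in 0..B, expIntegralE1 (z ^ 2) ≤ 3 * (Gamma (1 / 3) + Gamma (2 / 3)) := by
  set g : ℝ → ℝ := fun z => (Ioc 0 1).indicator (fun z => Gamma (1 / 3) * z ^ (-2 * (1 / 3) : ℝ)) z
    + (Ioi 1).indicator (fun z => Gamma (2 / 3) * z ^ (-2 * (2 / 3) : ℝ)) z with hg
  have hnear : IntegrableOn (fun z => Gamma (1 / 3) * z ^ (-2 * (1 / 3) : ℝ)) (Ioc 0 1) := by
    have := intervalIntegral.intervalIntegrable_rpow' (a := 0) (b := 1)
      (show (-1 : ℝ) < -2 * (1 / 3) by norm_num)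
    exact ((intervalIntegrable_iff_integrableOn_Ioc_of_le zero_le_one).1 this).const_mul _
  have hfar : IntegrableOn (fun z => Gamma (2 / 3) * z ^ (-2 * (2 / 3) : ℝ)) (Ioi 1) :=
    (integrableOn_Ioi_rpow_of_lt (by norm_num) zero_lt_one).const_mul _
  have hg_int : Integrable g :=
    (hnear.integrable_indicator measurableSet_Ioc).add (hfar.integrable_indicator measurableSet_Ioi)
  have hg_nonneg : 0 ≤ g := fun z => by
    refine add_nonneg (indicator_nonneg (fun z hz => ?_) z) (indicator_nonneg (fun z hz => ?_) z)
    · have : 0 < z := hz.1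
      positivity
    · have : 0 < z := zero_lt_one.trans hz
      positivity
  have hg_bound : ∀ z ∈ Ioc 0 B, expIntegralE1 (z ^ 2) ≤ g z := by
    rintro z ⟨hz, -⟩
    rcases le_or_gt z 1 with h1 | h1
    · simpa [hg, hz, h1, not_lt.2 h1] using expIntegralE1_sq_le hz (by norm_num : (0 : ℝ) < 1 / 3)
    · simpa [hg, hz, h1, not_le.2 h1] using expIntegralE1_sq_le hz (by norm_num : (0 : ℝ) < 2 / 3)
  have hg_integral : ∫ z, g z = 3 * (Gamma (1 / 3) + Gamma (2 / 3)) := by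
    rw [hg, integral_add (hnear.integrable_indicator measurableSet_Ioc)
        (hfar.integrable_indicator measurableSet_Ioi),
      integral_indicator measurableSet_Ioc, integral_indicator measurableSet_Ioi,
      integral_const_mul, integral_const_mul, ← intervalIntegral.integral_of_le zero_le_one,
      integral_rpow (Or.inl (by norm_num)), integral_Ioi_rpow_of_lt (by norm_num) zero_lt_one]
    norm_num
    ring
  calc ∫ z in 0..B, expIntegralE1 (z ^ 2)
      ≤ ∫ z in Ioc 0 B, g z := by
        rw [intervalIntegral.integral_of_le hB]
        refine integral_mono_of_nonneg ?_ hg_int.integrableOn ?_ <;>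
          filter_upwards [ae_restrict_mem measurableSet_Ioc] with z hz
        exacts [expIntegralE1_nonneg (sq_nonneg z), hg_bound z hz]
    _ ≤ ∫ z, g z := setIntegral_le_integral hg_int (Filter.Eventually.of_forall hg_nonneg)
    _ = 3 * (Gamma (1 / 3) + Gamma (2 / 3)) := hg_integral

lemma integral_comp_mul_sq {E : Type*} [NormedAddCommGroup E] [NormedSpace ℝ E] (f : ℝ → E)
    {k : ℝ} (hk : 0 < k) (b : ℝ) :
    ∫ y in 0..b, f (k * y ^ 2) = (√k)⁻¹ • ∫ z in 0..√k * b, f (z ^ 2) := by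
  have hsq : ∀ y, k * y ^ 2 = (√k * y) ^ 2 := fun y => by rw [mul_pow, sq_sqrt hk.le]
  simp only [hsq]
  rw [intervalIntegral.integral_comp_mul_left (fun z => f (z ^ 2)) (sqrt_pos.2 hk).ne', mul_zero]

lemma rpow_le_one_add_rpow {x p q : ℝ} (hx : 0 < x) (hqp : q ≤ p) (hp : p ≤ 0) :
    x ^ p ≤ 1 + x ^ q := by
  rcases le_total 1 x with h1 | h1
  · linarith [rpow_le_one_of_one_le_of_nonpos h1 hp, rpow_nonneg hx.le q]
  · linarith [rpow_le_rpow_of_exponent_ge hx h1 hqp]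

theorem exponential_integral_double_bound :
    ∃ C : ℝ, 0 < C ∧ ∀ b c t : ℝ, 0 < b → b ≤ π → 0 < c → 0 < t →
      (∫ y in (0 : ℝ)..b, ∫ x in Set.Ioi (c * y ^ 2 * t), Real.exp (-x) / x)
        ≤ C * (1 + c ^ (-(2 / 3) : ℝ)) * t ^ (-(1 / 2) : ℝ) := by
  refine ⟨3 * (Gamma (1 / 3) + Gamma (2 / 3)), by positivity, fun b c t hb _ hc ht => ?_⟩
  have hct : 0 < c * t := mul_pos hc ht
  have hscale : (√(c * t))⁻¹ = c ^ (-(1 / 2) : ℝ) * t ^ (-(1 / 2) : ℝ) := by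
    rw [sqrt_eq_rpow, ← rpow_neg hct.le, mul_rpow hc.le ht.le]
  simp only [show ∀ y : ℝ, c * y ^ 2 * t = c * t * y ^ 2 from fun y => by ring]
  calc ∫ y in 0..b, expIntegralE1 (c * t * y ^ 2)
      = (√(c * t))⁻¹ * ∫ z in 0..√(c * t) * b, expIntegralE1 (z ^ 2) :=
        integral_comp_mul_sq expIntegralE1 hct b
    _ ≤ c ^ (-(1 / 2) : ℝ) * t ^ (-(1 / 2) : ℝ) * (3 * (Gamma (1 / 3) + Gamma (2 / 3))) := by
        rw [hscale]
        gcongr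
        exact integral_expIntegralE1_sq_le (by positivity)
    _ ≤ 3 * (Gamma (1 / 3) + Gamma (2 / 3)) * (1 + c ^ (-(2 / 3) : ℝ)) * t ^ (-(1 / 2) : ℝ) := by
        rw [mul_comm, ← mul_assoc]
        gcongr
        exact rpow_le_one_add_rpow hc (by norm_num) (by norm_num)
end
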